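/- Under the same assumptions (X ~ Exp(mean L) independent of Y with density (2/δ) y^(2/δ−1)/(R₂²−R₁²) on [R₁^δ, R₂^δ], Γ = γ̄ X/Y), the cumulative distribution function of Γ is F_Γ(γ) = 1 − (2/(δ(R₂²−R₁²))) (Lγ̄/γ)^(2/δ) [ γinc(2/δ, R₂^δ γ/(Lγ̄)) − γinc(2/δ, R₁^δ γ/(Lγ̄)) ] for all γ > 0, where γinc is the lower incomplete gamma function. -/

import Mathlib

open MeasureTheory ProbabilityTheory Real Set Filter

/-- Exponential distribution with mean `m` (density `m⁻¹ e^{-x/m}` on `x ≥ 0`). -/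
noncomputable def expMean (m : ℝ) : Measure ℝ :=
  volume.withDensity fun x => ENNReal.ofReal (if 0 ≤ x then m⁻¹ * Real.exp (-x / m) else 0)

/-- Path-loss distribution: density `(2/δ) y^{2/δ-1}/(R₂²-R₁²)` on `[R₁^δ, R₂^δ]`. -/
noncomputable def pathLossMeasure (δ R₁ R₂ : ℝ) : Measure ℝ :=
  volume.withDensity fun y => ENNReal.ofReal
    (if y ∈ Set.Icc (R₁ ^ δ) (R₂ ^ δ) then 2 / δ * y ^ (2 / δ - 1) / (R₂ ^ 2 - R₁ ^ 2) else 0)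

/-- Lower incomplete gamma function `γinc(a,x) = ∫₀ˣ t^{a-1} e^{-t} dt`. -/
noncomputable def lowerGamma (a x : ℝ) : ℝ := ∫ t in (0:ℝ)..x, t ^ (a - 1) * Real.exp (-t)

/-!
Conditioning on `Y` (independence), `P(γ̄X/Y ≤ γ) = E[1 - exp(-cY)]` with `c = γ/(Lγ̄)`. Against
the density of `Y` the constant `1` integrates to `1`, and the substitution `t = c y` turns
`∫ y^(2/δ-1) e^(-cy) dy` over `[R₁^δ, R₂^δ]` into `c^(-2/δ)` times a difference of lower
incomplete gamma values.
-/

lemma expMean_eq_expMeasure (L : ℝ) : expMean L = expMeasure L⁻¹ := by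
  change _ = volume.withDensity (exponentialPDF L⁻¹)
  simp only [expMean, funext (exponentialPDF_eq L⁻¹), div_eq_inv_mul, mul_neg]

lemma expMean_Iic {L : ℝ} (hL : 0 < L) {t : ℝ} (ht : 0 ≤ t) :
    expMean L (Iic t) = ENNReal.ofReal (1 - exp (-t / L)) := by
  have := isProbabilityMeasure_expMeasure (inv_pos.2 hL)
  rw [expMean_eq_expMeasure, ← ofReal_cdf, cdf_expMeasure_eq (inv_pos.2 hL), if_pos ht,
    neg_div, div_eq_inv_mul]

lemma lowerGamma_mul {p x c : ℝ} (hx : 0 ≤ x) (hc : 0 < c) :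
    lowerGamma p (x * c) = c ^ p * ∫ y in (0:ℝ)..x, y ^ (p - 1) * exp (-(c * y)) := by
  have hsub : ∫ y in (0:ℝ)..x, (c * y) ^ (p - 1) * exp (-(c * y))
      = c⁻¹ * lowerGamma p (c * x) := by
    rw [intervalIntegral.integral_comp_mul_left (fun t => t ^ (p - 1) * exp (-t)) hc.ne',
      mul_zero, lowerGamma, smul_eq_mul]
  have hfactor : ∫ y in (0:ℝ)..x, (c * y) ^ (p - 1) * exp (-(c * y))
      = c ^ (p - 1) * ∫ y in (0:ℝ)..x, y ^ (p - 1) * exp (-(c * y)) := by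
    rw [← intervalIntegral.integral_const_mul]
    refine intervalIntegral.integral_congr fun y hy => ?_
    rw [uIcc_of_le hx] at hy
    simp only [mul_rpow hc.le hy.1, mul_assoc]
  rw [rpow_sub_one hc.ne'] at hfactor
  rw [mul_comm x c]
  field_simp at hsub hfactor
  linarith

lemma intervalIntegrable_rpow_sub_one_mul_exp {p : ℝ} (hp : 0 < p) (c a b : ℝ) :
    IntervalIntegrable (fun y => y ^ (p - 1) * exp (-(c * y))) volume a b :=
  (intervalIntegral.intervalIntegrable_rpow' (by linarith)).mul_continuousOn (by fun_prop)

section RpowExp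

variable {p a b c : ℝ}

lemma integral_rpow_sub_one_mul_exp_neg_mul (hp : 0 < p) (ha : 0 ≤ a) (hb : 0 ≤ b) (hc : 0 < c) :
    ∫ y in a..b, y ^ (p - 1) * exp (-(c * y))
      = c⁻¹ ^ p * (lowerGamma p (b * c) - lowerGamma p (a * c)) := by
  rw [lowerGamma_mul ha hc, lowerGamma_mul hb hc, ← mul_sub,
    intervalIntegral.integral_interval_sub_left (intervalIntegrable_rpow_sub_one_mul_exp hp c _ _)
      (intervalIntegrable_rpow_sub_one_mul_exp hp c _ _),
    inv_rpow hc.le, inv_mul_cancel_left₀ (rpow_pos_of_pos hc p).ne']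

lemma integral_rpow_sub_one_mul_one_sub_exp (hp : 0 < p) (ha : 0 ≤ a) (hb : 0 ≤ b) (hc : 0 < c) :
    ∫ y in a..b, y ^ (p - 1) * (1 - exp (-(c * y)))
      = (b ^ p - a ^ p) / p - c⁻¹ ^ p * (lowerGamma p (b * c) - lowerGamma p (a * c)) := by
  simp only [mul_one_sub]
  rw [intervalIntegral.integral_sub (intervalIntegral.intervalIntegrable_rpow' (by linarith))
      (intervalIntegrable_rpow_sub_one_mul_exp hp c a b),
    integral_rpow (Or.inl (by linarith)), sub_add_cancel,
    integral_rpow_sub_one_mul_exp_neg_mul hp ha hb hc]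

end RpowExp

lemma ProbabilityTheory.IndepFun.measure_preimage_eq_lintegral {Ω α β : Type*} [MeasurableSpace Ω]
    [MeasurableSpace α] [MeasurableSpace β] {μ : Measure Ω} [IsFiniteMeasure μ]
    {X : Ω → α} {Y : Ω → β} (hX : Measurable X) (hY : Measurable Y) (hXY : IndepFun X Y μ)
    {S : Set (α × β)} (hS : MeasurableSet S) :
    μ ((fun ω => (X ω, Y ω)) ⁻¹' S) = ∫⁻ y, μ.map X ((fun x => (x, y)) ⁻¹' S) ∂μ.map Y := by
  rw [← Measure.map_apply (hX.prodMk hY) hS,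
    (indepFun_iff_map_prod_eq_prod_map_map hX.aemeasurable hY.aemeasurable).1 hXY,
    Measure.prod_apply_symm hS]

section PathLoss

variable {δ R₁ R₂ : ℝ}

lemma ae_pathLossMeasure_mem_Icc : ∀ᵐ y ∂pathLossMeasure δ R₁ R₂, y ∈ Icc (R₁ ^ δ) (R₂ ^ δ) := by
  change pathLossMeasure δ R₁ R₂ (Icc (R₁ ^ δ) (R₂ ^ δ))ᶜ = 0
  rw [pathLossMeasure, withDensity_apply _ measurableSet_Icc.compl]
  exact (setLIntegral_congr_fun measurableSet_Icc.compl fun y hy => by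
    rw [if_neg hy, ENNReal.ofReal_zero]).trans lintegral_zero

lemma lintegral_pathLossMeasure (g : ℝ → ENNReal) :
    ∫⁻ y, g y ∂pathLossMeasure δ R₁ R₂ = ∫⁻ y in Icc (R₁ ^ δ) (R₂ ^ δ),
      ENNReal.ofReal (2 / δ * y ^ (2 / δ - 1) / (R₂ ^ 2 - R₁ ^ 2)) * g y := by
  have hdens : Measurable fun y : ℝ => ENNReal.ofReal
      (if y ∈ Icc (R₁ ^ δ) (R₂ ^ δ) then 2 / δ * y ^ (2 / δ - 1) / (R₂ ^ 2 - R₁ ^ 2) else 0) :=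
    (Measurable.ite measurableSet_Icc (by fun_prop) measurable_const).ennreal_ofReal
  rw [pathLossMeasure, lintegral_withDensity_eq_lintegral_mul_non_measurable _ hdens
    (.of_forall fun _ => ENNReal.ofReal_lt_top), ← lintegral_indicator measurableSet_Icc]
  congr 1 with y
  by_cases hy : y ∈ Icc (R₁ ^ δ) (R₂ ^ δ)
  · rw [indicator_of_mem hy, Pi.mul_apply, if_pos hy]
  · rw [indicator_of_notMem hy, Pi.mul_apply, if_neg hy, ENNReal.ofReal_zero, zero_mul]

lemma integral_pathLossDensity_mul_one_sub_exp (hδ : 0 < δ) (hR₁ : 0 ≤ R₁) (hR : R₁ < R₂)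
    {c : ℝ} (hc : 0 < c) :
    ∫ y in R₁ ^ δ..R₂ ^ δ, 2 / δ * y ^ (2 / δ - 1) / (R₂ ^ 2 - R₁ ^ 2) * (1 - exp (-(c * y))) =
      1 - 2 / (δ * (R₂ ^ 2 - R₁ ^ 2)) * c⁻¹ ^ (2 / δ) *
        (lowerGamma (2 / δ) (R₂ ^ δ * c) - lowerGamma (2 / δ) (R₁ ^ δ * c)) := by
  have hD : R₂ ^ 2 - R₁ ^ 2 ≠ 0 := by nlinarith
  have hpow : ∀ R : ℝ, 0 ≤ R → (R ^ δ) ^ (2 / δ) = R ^ 2 := fun R hR => by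
    rw [← rpow_mul hR, mul_div_cancel₀ _ hδ.ne', rpow_two]
  simp only [mul_div_right_comm _ _ (R₂ ^ 2 - R₁ ^ 2), mul_assoc]
  rw [intervalIntegral.integral_const_mul,
    integral_rpow_sub_one_mul_one_sub_exp (by positivity) (rpow_nonneg hR₁ δ)
      (rpow_nonneg (hR₁.trans hR.le) δ) hc, hpow R₁ hR₁, hpow R₂ (hR₁.trans hR.le)]
  field_simp

lemma lintegral_pathLossMeasure_one_sub_exp (hδ : 0 < δ) (hR₁ : 0 ≤ R₁) (hR : R₁ < R₂)
    {c : ℝ} (hc : 0 < c) :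
    ∫⁻ y, ENNReal.ofReal (1 - exp (-(c * y))) ∂pathLossMeasure δ R₁ R₂ =
      ENNReal.ofReal (1 - 2 / (δ * (R₂ ^ 2 - R₁ ^ 2)) * c⁻¹ ^ (2 / δ) *
        (lowerGamma (2 / δ) (R₂ ^ δ * c) - lowerGamma (2 / δ) (R₁ ^ δ * c))) := by
  have hab : R₁ ^ δ ≤ R₂ ^ δ := rpow_le_rpow hR₁ hR.le hδ.le
  have hdens : ∀ y ∈ Icc (R₁ ^ δ) (R₂ ^ δ), 0 ≤ 2 / δ * y ^ (2 / δ - 1) / (R₂ ^ 2 - R₁ ^ 2) :=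
    fun y hy => by
      have := rpow_nonneg ((rpow_nonneg hR₁ δ).trans hy.1) (2 / δ - 1)
      have : 0 < R₂ ^ 2 - R₁ ^ 2 := by nlinarith
      positivity
  have hcdf : ∀ y ∈ Icc (R₁ ^ δ) (R₂ ^ δ), 0 ≤ 1 - exp (-(c * y)) := fun y hy =>
    sub_nonneg.2 <| exp_le_one_iff.2 <| neg_nonpos.2 <|
      mul_nonneg hc.le ((rpow_nonneg hR₁ δ).trans hy.1)
  have hexp : -1 < 2 / δ - 1 := by linarith [show 0 < 2 / δ by positivity]
  have hint : IntervalIntegrable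
      (fun y => 2 / δ * y ^ (2 / δ - 1) / (R₂ ^ 2 - R₁ ^ 2) * (1 - exp (-(c * y)))) volume
      (R₁ ^ δ) (R₂ ^ δ) :=
    (((intervalIntegral.intervalIntegrable_rpow' hexp).const_mul _).div_const
      _).mul_continuousOn (by fun_prop)
  rw [lintegral_pathLossMeasure, ← integral_pathLossDensity_mul_one_sub_exp hδ hR₁ hR hc,
    intervalIntegral.integral_of_le hab, ← integral_Icc_eq_integral_Ioc,
    ofReal_integral_eq_lintegral_ofReal ((intervalIntegrable_iff_integrableOn_Icc_of_le hab).1 hint)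
      (ae_restrict_of_forall_mem measurableSet_Icc fun y hy => mul_nonneg (hdens y hy) (hcdf y hy))]
  exact setLIntegral_congr_fun measurableSet_Icc fun y hy => (ENNReal.ofReal_mul (hdens y hy)).symm

end PathLoss

lemma expMean_preimage_div_le {L g γ y : ℝ} (hL : 0 < L) (hg : 0 < g) (hγ : 0 < γ) (hy : 0 < y) :
    expMean L ((fun x => (x, y)) ⁻¹' {q : ℝ × ℝ | g * q.1 / q.2 ≤ γ})
      = ENNReal.ofReal (1 - exp (-(γ / (L * g) * y))) := by
  have hslice : (fun x => (x, y)) ⁻¹' {q : ℝ × ℝ | g * q.1 / q.2 ≤ γ} = Iic (γ * y / g) := by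
    ext x
    change g * x / y ≤ γ ↔ x ≤ γ * y / g
    rw [div_le_iff₀ hy, le_div_iff₀ hg, mul_comm x]
  rw [hslice, expMean_Iic hL (by positivity)]
  congr 3
  field_simp

/-- CDF of Γ = γ̄X/Y in the random discrete phase shifting model. -/
theorem statement_2 {Ω : Type*} [MeasureSpace Ω] [IsProbabilityMeasure (ℙ : Measure Ω)]
    (δ R₁ R₂ L gbar : ℝ) (hδ : 0 < δ) (hR₁ : 0 < R₁) (hR : R₁ < R₂) (hL : 0 < L)
    (hg : 0 < gbar) (X Y : Ω → ℝ) (hX : Measurable X) (hY : Measurable Y)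
    (hind : IndepFun X Y ℙ)
    (hXlaw : Measure.map X ℙ = expMean L)
    (hYlaw : Measure.map Y ℙ = pathLossMeasure δ R₁ R₂) :
    ∀ γ : ℝ, 0 < γ →
      ℙ {ω | gbar * X ω / Y ω ≤ γ} =
        ENNReal.ofReal (1 - 2 / (δ * (R₂ ^ 2 - R₁ ^ 2)) * (L * gbar / γ) ^ (2 / δ) *
          (lowerGamma (2 / δ) (R₂ ^ δ * γ / (L * gbar)) -
            lowerGamma (2 / δ) (R₁ ^ δ * γ / (L * gbar)))) := by
  intro γ hγ
  calc ℙ {ω | gbar * X ω / Y ω ≤ γ}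
      = ∫⁻ y, expMean L ((fun x => (x, y)) ⁻¹' {q : ℝ × ℝ | gbar * q.1 / q.2 ≤ γ})
          ∂pathLossMeasure δ R₁ R₂ := by
        rw [← hXlaw, ← hYlaw]
        exact hind.measure_preimage_eq_lintegral hX hY
          (measurableSet_le (by fun_prop : Measurable fun q : ℝ × ℝ => gbar * q.1 / q.2)
            measurable_const)
    _ = ∫⁻ y, ENNReal.ofReal (1 - exp (-(γ / (L * gbar) * y))) ∂pathLossMeasure δ R₁ R₂ :=
        lintegral_congr_ae <| ae_pathLossMeasure_mem_Icc.mono fun y hy =>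
          expMean_preimage_div_le hL hg hγ ((rpow_pos_of_pos hR₁ δ).trans_le hy.1)
    _ = _ := by
        rw [lintegral_pathLossMeasure_one_sub_exp hδ hR₁.le hR (by positivity), inv_div,
          ← mul_div_assoc, ← mul_div_assoc]
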